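/- Let X₁, X₂, X₃ be an ℝ-basis of su(2) with structure constants c^k_{ij}. Then the structure matrix C is symmetric, i.e. c¹₃₁ = c²₂₃, c¹₁₂ = c³₂₃, and c²₁₂ = c³₃₁ (equivalently, c²₂₁ + c³₃₁ = 0, c¹₁₂ + c³₃₂ = 0, and c¹₁₃ + c²₂₃ = 0). -/

import Mathlib

/-!
The real trace form `(A, B) ↦ Re tr (A B)` is symmetric, and on skew-Hermitian matrices
`Re tr (A A) = -tr (Aᴴ A)` vanishes only at `A = 0`; so the Gram matrix `G` of a linearly
independent skew-Hermitian family is invertible. Lowering the upper index of the structure constants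
with `G` gives `Re tr ([Xᵢ, Xⱼ] Xₗ)`, which is alternating in `i, j, l` by cyclicity of the trace.
For three generators this says `G C = φ • 1` with `φ = Re tr ([X₁, X₂] X₃)`, hence `C = φ • G⁻¹`
is symmetric.
-/

open Matrix BigOperators

open scoped ComplexOrder

theorem Matrix.IsSymm.of_mul_eq_smul_one {m R : Type*} [Fintype m] [DecidableEq m] [Field R]
    {G C : Matrix m m R} (hG : G.IsSymm) (hdet : G.det ≠ 0) {a : R} (h : G * C = a • 1) :
    C.IsSymm := by
  have hC : C = a • G⁻¹ := by
    rw [← nonsing_inv_mul_cancel_left G C hdet.isUnit, h, Matrix.mul_smul, mul_one]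
  exact hC ▸ hG.inv.smul a

section Commutator

variable {n R : Type*} [Fintype n] [CommRing R]

theorem Matrix.trace_commutator_mul_left (A B : Matrix n n R) :
    ((A * B - B * A) * A).trace = 0 := by
  rw [sub_mul, trace_sub, trace_mul_cycle B A A, sub_self]

theorem Matrix.trace_commutator_mul_right (A B : Matrix n n R) :
    ((A * B - B * A) * B).trace = 0 := by
  rw [sub_mul, trace_sub, trace_mul_cycle A B B, sub_self]

theorem Matrix.trace_commutator_mul_cycle (A B C : Matrix n n R) :
    ((A * B - B * A) * C).trace = ((B * C - C * B) * A).trace := by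
  rw [sub_mul, sub_mul, trace_sub, trace_sub, trace_mul_cycle B C A, trace_mul_cycle B A C]

end Commutator

section TraceForm

variable {ι n : Type*} [Fintype n]

theorem Matrix.eq_zero_of_re_trace_mul_self_eq_zero {A : Matrix n n ℂ} (hA : Aᴴ = -A)
    (h : (A * A).trace.re = 0) : A = 0 := by
  have hnonneg : 0 ≤ (Aᴴ * A).trace := (posSemidef_conjTranspose_mul_self A).trace_nonneg
  rw [← trace_conjTranspose_mul_self_eq_zero_iff]
  apply Complex.ext
  · simpa [hA] using h
  · exact (Complex.nonneg_iff.mp hnonneg).2.symm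

noncomputable def traceGram (X : ι → Matrix n n ℂ) : Matrix ι ι ℝ :=
  Matrix.of fun i j => (X i * X j).trace.re

theorem traceGram_isSymm (X : ι → Matrix n n ℂ) : (traceGram X).IsSymm :=
  Matrix.IsSymm.ext fun i j => by simp only [traceGram, of_apply]; rw [trace_mul_comm]

theorem traceGram_mulVec [Fintype ι] (X : ι → Matrix n n ℂ) (w : ι → ℝ) (l : ι) :
    (traceGram X *ᵥ w) l = (X l * ∑ k, w k • X k).trace.re := by
  simp [traceGram, mulVec, dotProduct, Finset.mul_sum, trace_sum, mul_comm]

theorem dotProduct_traceGram_mulVec [Fintype ι] (X : ι → Matrix n n ℂ) (v : ι → ℝ) :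
    v ⬝ᵥ traceGram X *ᵥ v = ((∑ k, v k • X k) * ∑ k, v k • X k).trace.re := by
  simp [dotProduct, traceGram_mulVec, Finset.sum_mul, trace_sum]

theorem traceGram_det_ne_zero [Fintype ι] [DecidableEq ι] {X : ι → Matrix n n ℂ}
    (hskew : ∀ i, (X i)ᴴ = -X i) (hind : LinearIndependent ℝ X) : (traceGram X).det ≠ 0 := by
  rw [Ne, ← exists_mulVec_eq_zero_iff]
  rintro ⟨v, hv, hGv⟩
  set A := ∑ k, v k • X k
  have hA : Aᴴ = -A := by simp [A, conjTranspose_sum, hskew, Finset.sum_neg_distrib]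
  have hAA : (A * A).trace.re = 0 := by
    rw [← dotProduct_traceGram_mulVec, hGv, dotProduct_zero]
  exact hv (funext <| Fintype.linearIndependent_iff.mp hind v <|
    eq_zero_of_re_trace_mul_self_eq_zero hA hAA)

/-- With indices shifted down by one, the columns `m = 0, 1, 2` correspond to the index pairs
`23, 31, 12` of the structure matrix `C`. -/
def structureMatrix (c : Fin 3 → Fin 3 → Fin 3 → ℝ) : Matrix (Fin 3) (Fin 3) ℝ :=
  Matrix.of fun k m => c k (m + 1) (m + 2)

variable {X : Fin 3 → Matrix n n ℂ} {c : Fin 3 → Fin 3 → Fin 3 → ℝ}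

theorem traceGram_mul_structureMatrix_apply
    (hc : ∀ i j, X i * X j - X j * X i = ∑ k, c k i j • X k) (l m : Fin 3) :
    (traceGram X * structureMatrix c) l m =
      ((X (m + 1) * X (m + 2) - X (m + 2) * X (m + 1)) * X l).trace.re := by
  rw [trace_mul_comm, hc, ← traceGram_mulVec]
  rfl

theorem traceGram_mul_structureMatrix
    (hc : ∀ i j, X i * X j - X j * X i = ∑ k, c k i j • X k) :
    traceGram X * structureMatrix c = ((X 0 * X 1 - X 1 * X 0) * X 2).trace.re • 1 := by
  ext l m
  rw [traceGram_mul_structureMatrix_apply hc]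
  fin_cases l <;> fin_cases m <;>
    simp [trace_commutator_mul_left, trace_commutator_mul_right,
      trace_commutator_mul_cycle (X 0) (X 1) (X 2), trace_commutator_mul_cycle (X 1) (X 2) (X 0)]

end TraceForm

theorem structure_matrix_symmetric
    (X : Fin 3 → Matrix (Fin 2) (Fin 2) ℂ)
    (hmem : ∀ i, (X i)ᴴ = -X i ∧ (X i).trace = 0)
    (hind : LinearIndependent ℝ X)
    (c : Fin 3 → Fin 3 → Fin 3 → ℝ)
    (hc : ∀ i j, X i * X j - X j * X i = ∑ k, c k i j • X k) :
    c 0 2 0 = c 1 1 2 ∧ c 0 0 1 = c 2 1 2 ∧ c 1 0 1 = c 2 2 0 := by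
  have hC : (structureMatrix c).IsSymm :=
    (traceGram_isSymm X).of_mul_eq_smul_one (traceGram_det_ne_zero (fun i => (hmem i).1) hind)
      (traceGram_mul_structureMatrix hc)
  exact ⟨hC.apply 1 0, hC.apply 2 0, hC.apply 2 1⟩
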